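/- arXiv:2105.13206 — 3 statements merged into one kernel-verified Lean document; each statement's English description precedes it below -/
import Mathlib

section
/- Let R, n be positive integers and let q_D ∈ [0,1). For each k ∈ {1,…,R} and ℓ ∈ {1,2,3}, let A_{ℓ,k} be an n×n real symmetric positive semidefinite matrix, let D_{ℓ,k} be an n×n real diagonal matrix, and let d⁰_{ℓ,k} > 0 be real constants satisfying the two-sided Loewner bounds (1−q_D)·d⁰_{ℓ,k}•I ≼ D_{ℓ,k} ≼ (1+q_D)·d⁰_{ℓ,k}•I. Define A := Σ_{k=1}^R ( A_{1,k}⊗D_{2,k}⊗D_{3,k} + D_{1,k}⊗A_{2,k}⊗D_{3,k} + D_{1,k}⊗D_{2,k}⊗A_{3,k} ) and A₂ := Σ_{k=1}^R ( d⁰_{2,k}d⁰_{3,k}•(A_{1,k}⊗I⊗I) + d⁰_{1,k}d⁰_{3,k}•(I⊗A_{2,k}⊗I) + d⁰_{1,k}d⁰_{2,k}•(I⊗I⊗A_{3,k}) ). Then (1−q_D)²•A₂ ≼ A ≼ (1+q_D)²•A₂. (Lemma 3.1, estimate (3.7) for the preconditioner matrix A₂, case d = 3.) -/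
/-! Kronecker products of positive semidefinite matrices are monotone in each factor for the
Loewner order, since `X' ⊗ Y - X ⊗ Y = (X' - X) ⊗ Y` is again a Kronecker product of positive
semidefinite matrices. As `(1 - q_D) d⁰_{ℓ,k} I ≼ D_{ℓ,k} ≼ (1 + q_D) d⁰_{ℓ,k} I`, each summand
of `A` therefore lies between the same summand with every `D_{ℓ,k}` replaced by
`(1 ∓ q_D) d⁰_{ℓ,k} I`, and these scalar versions sum to `(1 ∓ q_D)² A₂`. -/

open Matrix Kronecker
open scoped MatrixOrder

namespace Matrix

section Loewner

variable {𝕜 : Type*} [RCLike 𝕜] {l m p : Type*} [Fintype l] [Fintype m] [Fintype p]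

theorem kronecker_nonneg {X : Matrix m m 𝕜} {Y : Matrix p p 𝕜} (hX : 0 ≤ X) (hY : 0 ≤ Y) :
    0 ≤ X ⊗ₖ Y :=
  (hX.posSemidef.kronecker hY.posSemidef).nonneg

theorem kronecker_le_kronecker_left {X X' : Matrix m m 𝕜} {Y : Matrix p p 𝕜}
    (hXX' : X ≤ X') (hY : 0 ≤ Y) : X ⊗ₖ Y ≤ X' ⊗ₖ Y := by
  have h : X' ⊗ₖ Y - X ⊗ₖ Y = (X' - X) ⊗ₖ Y := by
    ext ⟨i, i'⟩ ⟨j, j'⟩; simp [sub_mul]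
  rw [← sub_nonneg, h]
  exact kronecker_nonneg (sub_nonneg.mpr hXX') hY

theorem kronecker_le_kronecker_right {X : Matrix m m 𝕜} {Y Y' : Matrix p p 𝕜}
    (hX : 0 ≤ X) (hYY' : Y ≤ Y') : X ⊗ₖ Y ≤ X ⊗ₖ Y' := by
  have h : X ⊗ₖ Y' - X ⊗ₖ Y = X ⊗ₖ (Y' - Y) := by
    ext ⟨i, i'⟩ ⟨j, j'⟩; simp [mul_sub]
  rw [← sub_nonneg, h]
  exact kronecker_nonneg hX (sub_nonneg.mpr hYY')

theorem kronecker_le_kronecker {X X' : Matrix m m 𝕜} {Y Y' : Matrix p p 𝕜}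
    (hX : 0 ≤ X) (hXX' : X ≤ X') (hY : 0 ≤ Y) (hYY' : Y ≤ Y') : X ⊗ₖ Y ≤ X' ⊗ₖ Y' :=
  (kronecker_le_kronecker_right hX hYY').trans (kronecker_le_kronecker_left hXX' (hY.trans hYY'))

theorem kronecker₃_le_kronecker₃ {X X' : Matrix l l 𝕜} {Y Y' : Matrix m m 𝕜}
    {Z Z' : Matrix p p 𝕜} (hX : 0 ≤ X) (hXX' : X ≤ X') (hY : 0 ≤ Y) (hYY' : Y ≤ Y')
    (hZ : 0 ≤ Z) (hZZ' : Z ≤ Z') : X ⊗ₖ Y ⊗ₖ Z ≤ X' ⊗ₖ Y' ⊗ₖ Z' :=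
  kronecker_le_kronecker (kronecker_nonneg hX hY) (kronecker_le_kronecker hX hXX' hY hYY') hZ hZZ'

end Loewner

def kroneckerSum₃ {α l m p : Type*} [Mul α] [Add α] (A₁ D₁ : Matrix l l α) (A₂ D₂ : Matrix m m α)
    (A₃ D₃ : Matrix p p α) : Matrix ((l × m) × p) ((l × m) × p) α :=
  A₁ ⊗ₖ D₂ ⊗ₖ D₃ + D₁ ⊗ₖ A₂ ⊗ₖ D₃ + D₁ ⊗ₖ D₂ ⊗ₖ A₃

theorem kroneckerSum₃_mono {𝕜 l m p : Type*} [RCLike 𝕜] [Fintype l] [Fintype m] [Fintype p]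
    {A₁ D₁ D₁' : Matrix l l 𝕜} {A₂ D₂ D₂' : Matrix m m 𝕜} {A₃ D₃ D₃' : Matrix p p 𝕜}
    (hA₁ : 0 ≤ A₁) (hA₂ : 0 ≤ A₂) (hA₃ : 0 ≤ A₃) (hD₁ : 0 ≤ D₁) (hD₂ : 0 ≤ D₂) (hD₃ : 0 ≤ D₃)
    (hD₁' : D₁ ≤ D₁') (hD₂' : D₂ ≤ D₂') (hD₃' : D₃ ≤ D₃') :
    kroneckerSum₃ A₁ D₁ A₂ D₂ A₃ D₃ ≤ kroneckerSum₃ A₁ D₁' A₂ D₂' A₃ D₃' :=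
  add_le_add (add_le_add (kronecker₃_le_kronecker₃ hA₁ le_rfl hD₂ hD₂' hD₃ hD₃')
    (kronecker₃_le_kronecker₃ hD₁ hD₁' hA₂ le_rfl hD₃ hD₃'))
    (kronecker₃_le_kronecker₃ hD₁ hD₁' hD₂ hD₂' hA₃ le_rfl)

theorem kroneckerSum₃_smul_one {α l m p : Type*} [CommSemiring α] [DecidableEq l]
    [DecidableEq m] [DecidableEq p] (A₁ : Matrix l l α) (A₂ : Matrix m m α) (A₃ : Matrix p p α)
    (c d₁ d₂ d₃ : α) :
    kroneckerSum₃ A₁ ((c * d₁) • 1) A₂ ((c * d₂) • 1) A₃ ((c * d₃) • 1) =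
      c ^ 2 • ((d₂ * d₃) • (A₁ ⊗ₖ 1 ⊗ₖ 1) + (d₁ * d₃) • (1 ⊗ₖ A₂ ⊗ₖ 1)
        + (d₁ * d₂) • (1 ⊗ₖ 1 ⊗ₖ A₃)) := by
  simp only [kroneckerSum₃, smul_kronecker, kronecker_smul, smul_add, smul_smul]
  ring_nf

end Matrix

theorem stmt_4_general {R n : ℕ}
    (qD : ℝ) (hq1 : qD < 1)
    (A1 A2 A3 D1 D2 D3 : Fin R → Matrix (Fin n) (Fin n) ℝ)
    (d1 d2 d3 : Fin R → ℝ)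
    (hA1 : ∀ k, (A1 k).PosSemidef) (hA2 : ∀ k, (A2 k).PosSemidef)
    (hA3 : ∀ k, (A3 k).PosSemidef)
    (hd1 : ∀ k, 0 < d1 k) (hd2 : ∀ k, 0 < d2 k) (hd3 : ∀ k, 0 < d3 k)
    (hD1low : ∀ k, (D1 k - ((1 - qD) * d1 k) • (1 : Matrix (Fin n) (Fin n) ℝ)).PosSemidef)
    (hD1up : ∀ k, (((1 + qD) * d1 k) • (1 : Matrix (Fin n) (Fin n) ℝ) - D1 k).PosSemidef)
    (hD2low : ∀ k, (D2 k - ((1 - qD) * d2 k) • (1 : Matrix (Fin n) (Fin n) ℝ)).PosSemidef)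
    (hD2up : ∀ k, (((1 + qD) * d2 k) • (1 : Matrix (Fin n) (Fin n) ℝ) - D2 k).PosSemidef)
    (hD3low : ∀ k, (D3 k - ((1 - qD) * d3 k) • (1 : Matrix (Fin n) (Fin n) ℝ)).PosSemidef)
    (hD3up : ∀ k, (((1 + qD) * d3 k) • (1 : Matrix (Fin n) (Fin n) ℝ) - D3 k).PosSemidef)
    (A A₂ : Matrix ((Fin n × Fin n) × Fin n) ((Fin n × Fin n) × Fin n) ℝ)
    (hA : A = ∑ k, (A1 k ⊗ₖ D2 k ⊗ₖ D3 k + D1 k ⊗ₖ A2 k ⊗ₖ D3 k + D1 k ⊗ₖ D2 k ⊗ₖ A3 k))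
    (hA₂ : A₂ = ∑ k,
      ((d2 k * d3 k) • (A1 k ⊗ₖ (1 : Matrix (Fin n) (Fin n) ℝ) ⊗ₖ (1 : Matrix (Fin n) (Fin n) ℝ))
        + (d1 k * d3 k) • ((1 : Matrix (Fin n) (Fin n) ℝ) ⊗ₖ A2 k ⊗ₖ (1 : Matrix (Fin n) (Fin n) ℝ))
        + (d1 k * d2 k) • ((1 : Matrix (Fin n) (Fin n) ℝ) ⊗ₖ (1 : Matrix (Fin n) (Fin n) ℝ) ⊗ₖ A3 k))) :
    (A - (1 - qD) ^ 2 • A₂).PosSemidef ∧ ((1 + qD) ^ 2 • A₂ - A).PosSemidef := by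
  have hq : 0 ≤ 1 - qD := by linarith
  have hscalar : ∀ {c d : ℝ}, 0 ≤ c → 0 < d → (0 : Matrix (Fin n) (Fin n) ℝ) ≤ (c * d) • 1 :=
    fun hc hd => (PosSemidef.one.smul (mul_nonneg hc hd.le)).nonneg
  have hD₁ k : 0 ≤ D1 k := (hscalar hq (hd1 k)).trans (hD1low k)
  have hD₂ k : 0 ≤ D2 k := (hscalar hq (hd2 k)).trans (hD2low k)
  have hD₃ k : 0 ≤ D3 k := (hscalar hq (hd3 k)).trans (hD3low k)
  have hA₂_eq (c : ℝ) : c ^ 2 • A₂ = ∑ k, kroneckerSum₃ (A1 k) ((c * d1 k) • 1)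
      (A2 k) ((c * d2 k) • 1) (A3 k) ((c * d3 k) • 1) := by
    simp only [hA₂, Finset.smul_sum, kroneckerSum₃_smul_one]
  have hA_eq : A = ∑ k, kroneckerSum₃ (A1 k) (D1 k) (A2 k) (D2 k) (A3 k) (D3 k) := hA
  refine ⟨le_iff.mp ?_, le_iff.mp ?_⟩
  · rw [hA₂_eq, hA_eq]
    exact Finset.sum_le_sum fun k _ => kroneckerSum₃_mono (hA1 k).nonneg (hA2 k).nonneg
      (hA3 k).nonneg (hscalar hq (hd1 k)) (hscalar hq (hd2 k)) (hscalar hq (hd3 k))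
      (hD1low k) (hD2low k) (hD3low k)
  · rw [hA₂_eq, hA_eq]
    exact Finset.sum_le_sum fun k _ => kroneckerSum₃_mono (hA1 k).nonneg (hA2 k).nonneg
      (hA3 k).nonneg (hD₁ k) (hD₂ k) (hD₃ k) (hD1up k) (hD2up k) (hD3up k)

/-- Lemma 3.1, estimate (3.7) for the preconditioner matrix `A₂`, case `d = 3`:
for symmetric positive semidefinite `A_{ℓ,k}`, diagonal `D_{ℓ,k}` with
`(1−q_D)·d⁰_{ℓ,k}•I ≼ D_{ℓ,k} ≼ (1+q_D)·d⁰_{ℓ,k}•I`, the Kronecker-rank matrices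
`A` and `A₂` satisfy `(1−q_D)²•A₂ ≼ A ≼ (1+q_D)²•A₂` in the Loewner order. -/
theorem stmt_4 {R n : ℕ} (hR : 0 < R) (hn : 0 < n)
    (qD : ℝ) (hq0 : 0 ≤ qD) (hq1 : qD < 1)
    (A1 A2 A3 D1 D2 D3 : Fin R → Matrix (Fin n) (Fin n) ℝ)
    (d1 d2 d3 : Fin R → ℝ)
    (hA1 : ∀ k, (A1 k).PosSemidef) (hA2 : ∀ k, (A2 k).PosSemidef)
    (hA3 : ∀ k, (A3 k).PosSemidef)
    (hD1diag : ∀ k, (D1 k).IsDiag) (hD2diag : ∀ k, (D2 k).IsDiag)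
    (hD3diag : ∀ k, (D3 k).IsDiag)
    (hd1 : ∀ k, 0 < d1 k) (hd2 : ∀ k, 0 < d2 k) (hd3 : ∀ k, 0 < d3 k)
    (hD1low : ∀ k, (D1 k - ((1 - qD) * d1 k) • (1 : Matrix (Fin n) (Fin n) ℝ)).PosSemidef)
    (hD1up : ∀ k, (((1 + qD) * d1 k) • (1 : Matrix (Fin n) (Fin n) ℝ) - D1 k).PosSemidef)
    (hD2low : ∀ k, (D2 k - ((1 - qD) * d2 k) • (1 : Matrix (Fin n) (Fin n) ℝ)).PosSemidef)
    (hD2up : ∀ k, (((1 + qD) * d2 k) • (1 : Matrix (Fin n) (Fin n) ℝ) - D2 k).PosSemidef)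
    (hD3low : ∀ k, (D3 k - ((1 - qD) * d3 k) • (1 : Matrix (Fin n) (Fin n) ℝ)).PosSemidef)
    (hD3up : ∀ k, (((1 + qD) * d3 k) • (1 : Matrix (Fin n) (Fin n) ℝ) - D3 k).PosSemidef)
    (A A₂ : Matrix ((Fin n × Fin n) × Fin n) ((Fin n × Fin n) × Fin n) ℝ)
    (hA : A = ∑ k, (A1 k ⊗ₖ D2 k ⊗ₖ D3 k + D1 k ⊗ₖ A2 k ⊗ₖ D3 k + D1 k ⊗ₖ D2 k ⊗ₖ A3 k))
    (hA₂ : A₂ = ∑ k,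
      ((d2 k * d3 k) • (A1 k ⊗ₖ (1 : Matrix (Fin n) (Fin n) ℝ) ⊗ₖ (1 : Matrix (Fin n) (Fin n) ℝ))
        + (d1 k * d3 k) • ((1 : Matrix (Fin n) (Fin n) ℝ) ⊗ₖ A2 k ⊗ₖ (1 : Matrix (Fin n) (Fin n) ℝ))
        + (d1 k * d2 k) • ((1 : Matrix (Fin n) (Fin n) ℝ) ⊗ₖ (1 : Matrix (Fin n) (Fin n) ℝ) ⊗ₖ A3 k))) :
    (A - (1 - qD) ^ 2 • A₂).PosSemidef ∧ ((1 + qD) ^ 2 • A₂ - A).PosSemidef :=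
  stmt_4_general qD hq1 A1 A2 A3 D1 D2 D3 d1 d2 d3 hA1 hA2 hA3 hd1 hd2 hd3 hD1low hD1up hD2low hD2up
    hD3low hD3up A A₂ hA hA₂
end

section
/- Let R, n be positive integers and let q_D ∈ [0,1). For each k ∈ {1,…,R} and ℓ ∈ {1,2}, let A_{ℓ,k} be an n×n real symmetric positive semidefinite matrix, let D_{ℓ,k} be an n×n real diagonal matrix, and let d⁰_{ℓ,k} > 0 be real constants satisfying (1−q_D)·d⁰_{ℓ,k}•I ≼ D_{ℓ,k} ≼ (1+q_D)·d⁰_{ℓ,k}•I. Define A := Σ_{k=1}^R ( A_{1,k}⊗D_{2,k} + D_{1,k}⊗A_{2,k} ) and A₂ := Σ_{k=1}^R ( d⁰_{2,k}•(A_{1,k}⊗I) + d⁰_{1,k}•(I⊗A_{2,k}) ). Then (1−q_D)•A₂ ≼ A ≼ (1+q_D)•A₂. (Lemma 3.1, estimate (3.7) for the preconditioner matrix A₂, case d = 2.) -/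
/-!
For `c = 1 - q_D`, the difference `A - c • A₂` splits term by term as
`A_{1,k} ⊗ (D_{2,k} - c d⁰_{2,k} I) + (D_{1,k} - c d⁰_{1,k} I) ⊗ A_{2,k}`, and symmetrically for
`(1 + q_D) • A₂ - A`. Each summand is a Kronecker product of two positive semidefinite matrices,
hence positive semidefinite.
-/

open Matrix Kronecker

namespace Matrix

section Identities

variable {R m n : Type*} [CommRing R] [DecidableEq m] [DecidableEq n]

theorem kronecker_add_kronecker_sub_smul_kronecker_one
    (A₁ D₁ : Matrix m m R) (A₂ D₂ : Matrix n n R) (c₁ c₂ : R) :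
    A₁ ⊗ₖ D₂ + D₁ ⊗ₖ A₂ - (c₂ • (A₁ ⊗ₖ 1) + c₁ • ((1 : Matrix m m R) ⊗ₖ A₂)) =
      A₁ ⊗ₖ (D₂ - c₂ • 1) + (D₁ - c₁ • 1) ⊗ₖ A₂ := by
  ext ⟨i, j⟩ ⟨k, l⟩
  simp only [sub_apply, add_apply, smul_apply, kroneckerMap_apply, smul_eq_mul]
  ring

theorem smul_kronecker_one_sub_kronecker_add_kronecker
    (A₁ D₁ : Matrix m m R) (A₂ D₂ : Matrix n n R) (c₁ c₂ : R) :
    c₂ • (A₁ ⊗ₖ 1) + c₁ • ((1 : Matrix m m R) ⊗ₖ A₂) - (A₁ ⊗ₖ D₂ + D₁ ⊗ₖ A₂) =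
      A₁ ⊗ₖ (c₂ • 1 - D₂) + (c₁ • 1 - D₁) ⊗ₖ A₂ := by
  ext ⟨i, j⟩ ⟨k, l⟩
  simp only [sub_apply, add_apply, smul_apply, kroneckerMap_apply, smul_eq_mul]
  ring

end Identities

section LoewnerBounds

open scoped ComplexOrder

variable {𝕜 m n : Type*} [RCLike 𝕜] [Fintype m] [Fintype n] [DecidableEq m] [DecidableEq n]
  {A₁ D₁ : Matrix m m 𝕜} {A₂ D₂ : Matrix n n 𝕜} {c₁ c₂ : 𝕜}

theorem PosSemidef.kronecker_add_kronecker_sub_smul_kronecker_one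
    (hA₁ : A₁.PosSemidef) (hA₂ : A₂.PosSemidef)
    (hD₁ : (D₁ - c₁ • 1).PosSemidef) (hD₂ : (D₂ - c₂ • 1).PosSemidef) :
    (A₁ ⊗ₖ D₂ + D₁ ⊗ₖ A₂ - (c₂ • (A₁ ⊗ₖ 1) + c₁ • ((1 : Matrix m m 𝕜) ⊗ₖ A₂))).PosSemidef := by
  rw [Matrix.kronecker_add_kronecker_sub_smul_kronecker_one]
  exact (hA₁.kronecker hD₂).add (hD₁.kronecker hA₂)

theorem PosSemidef.smul_kronecker_one_sub_kronecker_add_kronecker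
    (hA₁ : A₁.PosSemidef) (hA₂ : A₂.PosSemidef)
    (hD₁ : (c₁ • 1 - D₁).PosSemidef) (hD₂ : (c₂ • 1 - D₂).PosSemidef) :
    (c₂ • (A₁ ⊗ₖ 1) + c₁ • ((1 : Matrix m m 𝕜) ⊗ₖ A₂) - (A₁ ⊗ₖ D₂ + D₁ ⊗ₖ A₂)).PosSemidef := by
  rw [Matrix.smul_kronecker_one_sub_kronecker_add_kronecker]
  exact (hA₁.kronecker hD₂).add (hD₁.kronecker hA₂)

end LoewnerBounds

end Matrix

theorem stmt_6_general {R n : ℕ}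
    (qD : ℝ)
    (A1 A2 D1 D2 : Fin R → Matrix (Fin n) (Fin n) ℝ)
    (d1 d2 : Fin R → ℝ)
    (hA1 : ∀ k, (A1 k).PosSemidef) (hA2 : ∀ k, (A2 k).PosSemidef)
    (hD1low : ∀ k, (D1 k - ((1 - qD) * d1 k) • (1 : Matrix (Fin n) (Fin n) ℝ)).PosSemidef)
    (hD1up : ∀ k, (((1 + qD) * d1 k) • (1 : Matrix (Fin n) (Fin n) ℝ) - D1 k).PosSemidef)
    (hD2low : ∀ k, (D2 k - ((1 - qD) * d2 k) • (1 : Matrix (Fin n) (Fin n) ℝ)).PosSemidef)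
    (hD2up : ∀ k, (((1 + qD) * d2 k) • (1 : Matrix (Fin n) (Fin n) ℝ) - D2 k).PosSemidef)
    (A A₂ : Matrix (Fin n × Fin n) (Fin n × Fin n) ℝ)
    (hA : A = ∑ k, (A1 k ⊗ₖ D2 k + D1 k ⊗ₖ A2 k))
    (hA₂ : A₂ = ∑ k, (d2 k • (A1 k ⊗ₖ (1 : Matrix (Fin n) (Fin n) ℝ))
        + d1 k • ((1 : Matrix (Fin n) (Fin n) ℝ) ⊗ₖ A2 k))) :
    (A - (1 - qD) • A₂).PosSemidef ∧ ((1 + qD) • A₂ - A).PosSemidef := by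
  subst hA hA₂
  rw [Finset.smul_sum, Finset.smul_sum, ← Finset.sum_sub_distrib, ← Finset.sum_sub_distrib]
  refine ⟨posSemidef_sum _ fun k _ => ?_, posSemidef_sum _ fun k _ => ?_⟩
  · rw [smul_add, smul_smul, smul_smul]
    exact (hA1 k).kronecker_add_kronecker_sub_smul_kronecker_one (hA2 k) (hD1low k) (hD2low k)
  · rw [smul_add, smul_smul, smul_smul]
    exact (hA1 k).smul_kronecker_one_sub_kronecker_add_kronecker (hA2 k) (hD1up k) (hD2up k)

/-- Lemma 3.1, estimate (3.7) for the preconditioner matrix `A₂`, case `d = 2`: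
for symmetric positive semidefinite `A_{ℓ,k}` and diagonal `D_{ℓ,k}` with
`(1−q_D)·d⁰_{ℓ,k}•I ≼ D_{ℓ,k} ≼ (1+q_D)·d⁰_{ℓ,k}•I`, the matrices
`A = Σ_k (A_{1,k}⊗D_{2,k} + D_{1,k}⊗A_{2,k})` and
`A₂ = Σ_k (d⁰_{2,k}•(A_{1,k}⊗I) + d⁰_{1,k}•(I⊗A_{2,k}))` satisfy
`(1−q_D)•A₂ ≼ A ≼ (1+q_D)•A₂` in the Loewner order. -/
theorem stmt_6 {R n : ℕ} (hR : 0 < R) (hn : 0 < n)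
    (qD : ℝ) (hq0 : 0 ≤ qD) (hq1 : qD < 1)
    (A1 A2 D1 D2 : Fin R → Matrix (Fin n) (Fin n) ℝ)
    (d1 d2 : Fin R → ℝ)
    (hA1 : ∀ k, (A1 k).PosSemidef) (hA2 : ∀ k, (A2 k).PosSemidef)
    (hD1diag : ∀ k, (D1 k).IsDiag) (hD2diag : ∀ k, (D2 k).IsDiag)
    (hd1 : ∀ k, 0 < d1 k) (hd2 : ∀ k, 0 < d2 k)
    (hD1low : ∀ k, (D1 k - ((1 - qD) * d1 k) • (1 : Matrix (Fin n) (Fin n) ℝ)).PosSemidef)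
    (hD1up : ∀ k, (((1 + qD) * d1 k) • (1 : Matrix (Fin n) (Fin n) ℝ) - D1 k).PosSemidef)
    (hD2low : ∀ k, (D2 k - ((1 - qD) * d2 k) • (1 : Matrix (Fin n) (Fin n) ℝ)).PosSemidef)
    (hD2up : ∀ k, (((1 + qD) * d2 k) • (1 : Matrix (Fin n) (Fin n) ℝ) - D2 k).PosSemidef)
    (A A₂ : Matrix (Fin n × Fin n) (Fin n × Fin n) ℝ)
    (hA : A = ∑ k, (A1 k ⊗ₖ D2 k + D1 k ⊗ₖ A2 k))
    (hA₂ : A₂ = ∑ k, (d2 k • (A1 k ⊗ₖ (1 : Matrix (Fin n) (Fin n) ℝ))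
        + d1 k • ((1 : Matrix (Fin n) (Fin n) ℝ) ⊗ₖ A2 k))) :
    (A - (1 - qD) • A₂).PosSemidef ∧ ((1 + qD) • A₂ - A).PosSemidef :=
  stmt_6_general qD A1 A2 D1 D2 d1 d2 hA1 hA2 hD1low hD1up hD2low hD2up A A₂ hA hA₂
end

section
/- Let d ≥ 2 be a natural number, q ∈ [0,1), and let A and P be n×n real symmetric positive definite matrices satisfying (1−q)^{d−1}•P ≼ A ≼ (1+q)^{d−1}•P in the Loewner order. Then min{(1+q)^{1−d}, (1−q)^{d−1}}•(P + P⁻¹) ≼ A + A⁻¹ ≼ max{(1+q)^{d−1}, (1−q)^{1−d}}•(P + P⁻¹); consequently the generalized condition number of the preconditioned matrix (P + P⁻¹)⁻¹(A + A⁻¹) is bounded by Q^{d−1} := max{(1+q)^{d−1}, (1−q)^{1−d}} / min{(1+q)^{1−d}, (1−q)^{d−1}}, uniformly in n. (Theorem 3.2, bound (3.9) for the preconditioner B₂ = A₂ + A₂⁻¹.) -/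
/-!
Inversion reverses the Loewner order on positive definite matrices, so `a • P ≤ A ≤ b • P`
also gives `b⁻¹ • P⁻¹ ≤ A⁻¹ ≤ a⁻¹ • P⁻¹`. Adding the two sandwiches and moving to a common
coefficient bounds `A + A⁻¹` between `min b⁻¹ a • (P + P⁻¹)` and `max b a⁻¹ • (P + P⁻¹)`, and
these bounds confine every generalized Rayleigh quotient of the pencil.
-/

open Matrix

/-- Generalized condition number of the pencil `(M, N)`: the ratio of the largest
to the smallest generalized Rayleigh quotient `(xᵀMx)/(xᵀNx)` over nonzero `x`,
i.e. the ratio of the largest to the smallest generalized eigenvalue for a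
symmetric positive definite pencil. -/
noncomputable def genCond {n : ℕ} (M N : Matrix (Fin n) (Fin n) ℝ) : ℝ :=
  sSup {r : ℝ | ∃ x : Fin n → ℝ, x ≠ 0 ∧ r = (x ⬝ᵥ M *ᵥ x) / (x ⬝ᵥ N *ᵥ x)} /
  sInf {r : ℝ | ∃ x : Fin n → ℝ, x ≠ 0 ∧ r = (x ⬝ᵥ M *ᵥ x) / (x ⬝ᵥ N *ᵥ x)}

open scoped MatrixOrder

namespace Matrix

variable {n : Type*}

lemma PosDef.of_le {A B : Matrix n n ℝ} (hA : A.PosDef) (hAB : A ≤ B) : B.PosDef := by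
  simpa using hA.add_posSemidef (le_iff.1 hAB)

lemma smul_le_smul_of_posSemidef {A : Matrix n n ℝ} (hA : A.PosSemidef) {c d : ℝ} (hcd : c ≤ d) :
    c • A ≤ d • A := by
  rw [le_iff, ← sub_smul]
  exact hA.smul (sub_nonneg.2 hcd)

variable [Fintype n]

lemma IsHermitian.dotProduct_mulVec_comm {A : Matrix n n ℝ} (hA : A.IsHermitian)
    (x y : n → ℝ) : x ⬝ᵥ A *ᵥ y = y ⬝ᵥ A *ᵥ x := by
  have hAT : Aᵀ = A := by simpa [conjTranspose_eq_transpose_of_trivial] using hA.eq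
  rw [dotProduct_mulVec, ← mulVec_transpose, hAT, dotProduct_comm]

lemma dotProduct_mulVec_mono {A B : Matrix n n ℝ} (hAB : A ≤ B) (x : n → ℝ) :
    x ⬝ᵥ A *ᵥ x ≤ x ⬝ᵥ B *ᵥ x := by
  have := (le_iff.1 hAB).dotProduct_mulVec_nonneg x
  rw [star_trivial, sub_mulVec, dotProduct_sub] at this
  linarith

variable [DecidableEq n]

lemma PosDef.inv_le_inv_of_le {A B : Matrix n n ℝ} (hA : A.PosDef) (hAB : A ≤ B) :
    B⁻¹ ≤ A⁻¹ := by
  have hB : B.PosDef := hA.of_le hAB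
  refine PosSemidef.of_dotProduct_mulVec_nonneg (hA.1.inv.sub hB.1.inv) fun x => ?_
  set y := B⁻¹ *ᵥ x
  set z := A⁻¹ *ᵥ x
  have hAz : A *ᵥ z = x := by
    rw [mulVec_mulVec, mul_nonsing_inv _ hA.det_pos.ne'.isUnit, one_mulVec]
  have hBy : B *ᵥ y = x := by
    rw [mulVec_mulVec, mul_nonsing_inv _ hB.det_pos.ne'.isUnit, one_mulVec]
  have hsplit : x ⬝ᵥ (A⁻¹ - B⁻¹) *ᵥ x = (z - y) ⬝ᵥ A *ᵥ (z - y) + y ⬝ᵥ (B - A) *ᵥ y := by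
    have hsymm := hA.1.dotProduct_mulVec_comm y z
    simp only [sub_mulVec, mulVec_sub, dotProduct_sub, sub_dotProduct, hAz, hBy] at hsymm ⊢
    rw [dotProduct_comm x z, dotProduct_comm x y, hsymm]
    ring
  rw [star_trivial, hsplit]
  exact add_nonneg (hA.posSemidef.dotProduct_mulVec_nonneg _)
    ((le_iff.1 hAB).dotProduct_mulVec_nonneg _)

lemma inv_smul_of_ne_zero {K : Type*} [Field K] {A : Matrix n n K} (hA : IsUnit A.det) {c : K}
    (hc : c ≠ 0) : (c • A)⁻¹ = c⁻¹ • A⁻¹ :=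
  inv_eq_left_inv (by simp [hc, smul_smul, nonsing_inv_mul _ hA])

lemma PosDef.inv_le_smul_inv_of_smul_le {A P : Matrix n n ℝ} (hP : P.PosDef) {c : ℝ}
    (hc : 0 < c) (h : c • P ≤ A) : A⁻¹ ≤ c⁻¹ • P⁻¹ := by
  simpa [inv_smul_of_ne_zero hP.det_pos.ne'.isUnit hc.ne'] using (hP.smul hc).inv_le_inv_of_le h

lemma PosDef.smul_inv_le_inv_of_le_smul {A P : Matrix n n ℝ} (hA : A.PosDef) (hP : P.PosDef)
    {c : ℝ} (hc : 0 < c) (h : A ≤ c • P) : c⁻¹ • P⁻¹ ≤ A⁻¹ := by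
  simpa [inv_smul_of_ne_zero hP.det_pos.ne'.isUnit hc.ne'] using hA.inv_le_inv_of_le h

variable {A P : Matrix n n ℝ} {a b : ℝ}

lemma PosDef.min_smul_add_inv_le (hP : P.PosDef) (ha : 0 < a) (hb : 0 < b)
    (hlow : a • P ≤ A) (hup : A ≤ b • P) : min b⁻¹ a • (P + P⁻¹) ≤ A + A⁻¹ := by
  have hA : A.PosDef := (hP.smul ha).of_le hlow
  rw [smul_add]
  gcongr
  · exact (smul_le_smul_of_posSemidef hP.posSemidef (min_le_right _ _)).trans hlow
  · exact (smul_le_smul_of_posSemidef hP.inv.posSemidef (min_le_left _ _)).trans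
      (hA.smul_inv_le_inv_of_le_smul hP hb hup)

lemma PosDef.add_inv_le_max_smul (hP : P.PosDef) (ha : 0 < a)
    (hlow : a • P ≤ A) (hup : A ≤ b • P) : A + A⁻¹ ≤ max b a⁻¹ • (P + P⁻¹) := by
  rw [smul_add]
  gcongr
  · exact hup.trans (smul_le_smul_of_posSemidef hP.posSemidef (le_max_left _ _))
  · exact (hP.inv_le_smul_inv_of_smul_le ha hlow).trans
      (smul_le_smul_of_posSemidef hP.inv.posSemidef (le_max_right _ _))

end Matrix

lemma genCond_le_div_of_smul_le {n : ℕ} {M N : Matrix (Fin n) (Fin n) ℝ} (hN : N.PosDef)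
    {m m' : ℝ} (hm : 0 < m) (hm' : 0 ≤ m') (hlow : m • N ≤ M) (hup : M ≤ m' • N) :
    genCond M N ≤ m' / m := by
  set S := {r : ℝ | ∃ x : Fin n → ℝ, x ≠ 0 ∧ r = (x ⬝ᵥ M *ᵥ x) / (x ⬝ᵥ N *ᵥ x)}
  have hS : ∀ r ∈ S, m ≤ r ∧ r ≤ m' := by
    rintro r ⟨x, hx, rfl⟩
    have hden : 0 < x ⬝ᵥ N *ᵥ x := by simpa using hN.dotProduct_mulVec_pos hx
    have h₁ := dotProduct_mulVec_mono hlow x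
    have h₂ := dotProduct_mulVec_mono hup x
    simp only [smul_mulVec, dotProduct_smul, smul_eq_mul] at h₁ h₂
    exact ⟨(le_div_iff₀ hden).2 h₁, (div_le_iff₀ hden).2 h₂⟩
  change sSup S / sInf S ≤ m' / m
  rcases S.eq_empty_or_nonempty with hempty | hne
  -- only for `n = 0`, where `genCond` is the junk value `0 / 0 = 0`
  · simp only [hempty, Real.sSup_empty, Real.sInf_empty, div_zero]
    positivity
  · exact div_le_div₀ hm' (csSup_le hne fun r hr => (hS r hr).2) hm
      (le_csInf hne fun r hr => (hS r hr).1)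

theorem stmt_9_general {n : ℕ} (d : ℕ) (q : ℝ) (hq0 : 0 ≤ q) (hq1 : q < 1)
    (A P : Matrix (Fin n) (Fin n) ℝ) (hP : P.PosDef)
    (hlow : (A - (1 - q) ^ (d - 1) • P).PosSemidef)
    (hup : ((1 + q) ^ (d - 1) • P - A).PosSemidef) :
    ((A + A⁻¹) - min (((1 + q) ^ (d - 1))⁻¹) ((1 - q) ^ (d - 1)) • (P + P⁻¹)).PosSemidef ∧
    (max ((1 + q) ^ (d - 1)) (((1 - q) ^ (d - 1))⁻¹) • (P + P⁻¹) - (A + A⁻¹)).PosSemidef ∧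
    genCond (A + A⁻¹) (P + P⁻¹) ≤
      max ((1 + q) ^ (d - 1)) (((1 - q) ^ (d - 1))⁻¹) /
        min (((1 + q) ^ (d - 1))⁻¹) ((1 - q) ^ (d - 1)) := by
  have ha : 0 < (1 - q) ^ (d - 1) := pow_pos (by linarith) _
  have hb : 0 < (1 + q) ^ (d - 1) := pow_pos (by linarith) _
  have hlower := hP.min_smul_add_inv_le ha hb hlow hup
  have hupper := hP.add_inv_le_max_smul ha hlow hup
  refine ⟨hlower, hupper, genCond_le_div_of_smul_le (hP.add hP.inv) ?_ ?_ hlower hupper⟩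
  · exact lt_min (inv_pos.2 hb) ha
  · exact le_max_of_le_left hb.le

/-- Theorem 3.2, bound (3.9) for the preconditioner `B₂ = A₂ + A₂⁻¹`: if
`(1−q)^{d−1}•P ≼ A ≼ (1+q)^{d−1}•P` for symmetric positive definite `A`, `P`,
then `min{(1+q)^{1−d}, (1−q)^{d−1}}•(P+P⁻¹) ≼ A+A⁻¹ ≼
max{(1+q)^{d−1}, (1−q)^{1−d}}•(P+P⁻¹)`; consequently the generalized condition
number of `(P+P⁻¹)⁻¹(A+A⁻¹)` is bounded by
`Q^{d−1} = max{(1+q)^{d−1}, (1−q)^{1−d}} / min{(1+q)^{1−d}, (1−q)^{d−1}}`,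
uniformly in `n`. -/
theorem stmt_9 {n : ℕ} (d : ℕ) (hd : 2 ≤ d) (q : ℝ) (hq0 : 0 ≤ q) (hq1 : q < 1)
    (A P : Matrix (Fin n) (Fin n) ℝ) (hA : A.PosDef) (hP : P.PosDef)
    (hlow : (A - (1 - q) ^ (d - 1) • P).PosSemidef)
    (hup : ((1 + q) ^ (d - 1) • P - A).PosSemidef) :
    ((A + A⁻¹) - min (((1 + q) ^ (d - 1))⁻¹) ((1 - q) ^ (d - 1)) • (P + P⁻¹)).PosSemidef ∧
    (max ((1 + q) ^ (d - 1)) (((1 - q) ^ (d - 1))⁻¹) • (P + P⁻¹) - (A + A⁻¹)).PosSemidef ∧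
    genCond (A + A⁻¹) (P + P⁻¹) ≤
      max ((1 + q) ^ (d - 1)) (((1 - q) ^ (d - 1))⁻¹) /
        min (((1 + q) ^ (d - 1))⁻¹) ((1 - q) ^ (d - 1)) :=
  stmt_9_general d q hq0 hq1 A P hP hlow hup
end
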